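/- arXiv:math-ph/0510057 — 3 statements merged into one kernel-verified Lean document; each statement's English description precedes it below -/
import Mathlib

section
/- Let A and B be n×n Hermitian matrices with eigenvalues λ₁ ≤ … ≤ λₙ and μ₁ ≤ … ≤ μₙ respectively, and suppose A = B + α⟨·, y⟩y for some α > 0 and vector y (a positive rank-one perturbation). Then the eigenvalues interlace: μ₁ ≤ λ₁ ≤ μ₂ ≤ λ₂ ≤ … ≤ μₙ ≤ λₙ. -/
open Polynomial
open scoped InnerProductSpace
open Matrix Module Submodule Finset RCLike

/-!
Both inequalities come from one comparison principle. If a function `f` on `E` satisfies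
`f x ≤ r ‖x‖²` on a subspace `U` and `s ‖x‖² ≤ f x` on `V`, and `dim U + dim V > dim E`, then a
nonzero common vector gives `s ≤ r`. Quadratic forms are bounded above by `r ‖x‖²` on the span of
the eigenvectors with eigenvalue `≤ r`, and below likewise. Since `⟪A x, x⟫ = ⟪B x, x⟫ + α |⟪y, x⟫|²`,
the form of `A` dominates that of `B` everywhere, which gives `μⱼ ≤ λⱼ`; on the hyperplane `y⊥` the
two forms agree, and the one dimension lost there shifts the index: `λᵢ ≤ μᵢ₊₁`.
-/

theorem Submodule.finrank_add_finrank_le_finrank_inf_add {K V : Type*} [DivisionRing K]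
    [AddCommGroup V] [Module K V] [FiniteDimensional K V] (U W : Submodule K V) :
    finrank K U + finrank K W ≤ finrank K ↥(U ⊓ W) + finrank K V := by
  have := Submodule.finrank_le (U ⊔ W)
  have := Submodule.finrank_sup_add_finrank_inf_eq U W
  omega

section Dimension

variable {𝕜 E : Type*} [RCLike 𝕜] [NormedAddCommGroup E] [InnerProductSpace 𝕜 E]
  [FiniteDimensional 𝕜 E]

theorem Submodule.finrank_le_finrank_orthogonal_span_singleton_add_one (y : E) :
    finrank 𝕜 E ≤ finrank 𝕜 (𝕜 ∙ y)ᗮ + 1 := by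
  have := (𝕜 ∙ y).finrank_add_finrank_orthogonal
  have : finrank 𝕜 (𝕜 ∙ y) ≤ 1 := (finrank_span_le_card {y}).trans (by simp)
  omega

theorem le_of_finrank_lt_of_bounds {f : E → ℝ} {U V : Submodule 𝕜 E} {r s : ℝ}
    (hdim : finrank 𝕜 E < finrank 𝕜 U + finrank 𝕜 V)
    (hU : ∀ x ∈ U, f x ≤ r * ‖x‖ ^ 2) (hV : ∀ x ∈ V, s * ‖x‖ ^ 2 ≤ f x) : s ≤ r := by
  have hUV : ¬Disjoint U V := fun h => hdim.not_ge (finrank_add_finrank_le_of_disjoint h)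
  obtain ⟨x, ⟨hxU, hxV⟩, hx⟩ := exists_mem_ne_zero_of_ne_bot (disjoint_iff.not.mp hUV)
  exact le_of_mul_le_mul_right ((hV x hxV).trans (hU x hxU)) (by positivity)

end Dimension

section Eigenbasis

variable {𝕜 E ι : Type*} [RCLike 𝕜] [NormedAddCommGroup E] [InnerProductSpace 𝕜 E] [Fintype ι]
  {T : E →ₗ[𝕜] E} {b : OrthonormalBasis ι 𝕜 E} {ev : ι → ℝ}

theorem OrthonormalBasis.repr_eq_zero_of_mem_span_image {s : Set ι} {x : E}
    (hx : x ∈ span 𝕜 (b '' s)) {i : ι} (hi : i ∉ s) : b.repr x i = 0 := by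
  rw [← b.coe_toBasis, b.toBasis.mem_span_image] at hx
  rw [← b.coe_toBasis_repr_apply]
  exact Finsupp.notMem_support_iff.mp fun h => hi (hx h)

theorem OrthonormalBasis.finrank_span_image (b : OrthonormalBasis ι 𝕜 E) (s : Finset ι) :
    finrank 𝕜 (span 𝕜 (b '' s)) = #s := by
  rw [Set.image_eq_range]
  exact (finrank_span_eq_card (b.orthonormal.linearIndependent.comp _ Subtype.val_injective)).trans
    (Fintype.card_coe s)

theorem re_inner_map_self_eq_sum (hb : ∀ i, T (b i) = (ev i : 𝕜) • b i) (x : E) :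
    re ⟪T x, x⟫_𝕜 = ∑ i, ev i * ‖b.repr x i‖ ^ 2 := by
  conv_lhs => rw [← b.sum_repr x]
  simp only [map_sum, map_smul, hb, smul_smul, b.orthonormal.inner_sum]
  refine sum_congr rfl fun i _ => ?_
  rw [map_mul (starRingEnd 𝕜), conj_ofReal, mul_right_comm, RCLike.conj_mul, ← ofReal_pow,
    ← ofReal_mul, ofReal_re, mul_comm]

theorem re_inner_map_self_le_of_mem_span (hb : ∀ i, T (b i) = (ev i : 𝕜) • b i) {r : ℝ} {x : E}
    (hx : x ∈ span 𝕜 (b '' {i | ev i ≤ r})) : re ⟪T x, x⟫_𝕜 ≤ r * ‖x‖ ^ 2 := by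
  rw [re_inner_map_self_eq_sum hb, ← b.repr.norm_map, EuclideanSpace.norm_sq_eq, mul_sum]
  refine sum_le_sum fun i _ => ?_
  by_cases hi : ev i ≤ r
  · exact mul_le_mul_of_nonneg_right hi (sq_nonneg _)
  · simp [b.repr_eq_zero_of_mem_span_image hx hi]

theorem le_re_inner_map_self_of_mem_span (hb : ∀ i, T (b i) = (ev i : 𝕜) • b i) {r : ℝ} {x : E}
    (hx : x ∈ span 𝕜 (b '' {i | r ≤ ev i})) : r * ‖x‖ ^ 2 ≤ re ⟪T x, x⟫_𝕜 := by
  rw [re_inner_map_self_eq_sum hb, ← b.repr.norm_map, EuclideanSpace.norm_sq_eq, mul_sum]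
  refine sum_le_sum fun i _ => ?_
  by_cases hi : r ≤ ev i
  · exact mul_le_mul_of_nonneg_right hi (sq_nonneg _)
  · simp [b.repr_eq_zero_of_mem_span_image hx hi]

variable {κ : Type*} [Fintype κ] [FiniteDimensional 𝕜 E] {S : E →ₗ[𝕜] E} {c : OrthonormalBasis κ 𝕜 E}
  {ev' : κ → ℝ}

theorem le_of_forall_mem_re_inner_le (hb : ∀ i, T (b i) = (ev i : 𝕜) • b i)
    (hc : ∀ k, S (c k) = (ev' k : 𝕜) • c k) {W : Submodule 𝕜 E} {d : ℕ}
    (hWd : finrank 𝕜 E ≤ finrank 𝕜 W + d) (hW : ∀ x ∈ W, re ⟪S x, x⟫_𝕜 ≤ re ⟪T x, x⟫_𝕜) {r s : ℝ}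
    (hcard : finrank 𝕜 E + d < #{i | ev i ≤ r} + #{k | s ≤ ev' k}) : s ≤ r := by
  refine le_of_finrank_lt_of_bounds (f := fun x => re ⟪S x, x⟫_𝕜)
    (U := W ⊓ span 𝕜 (b '' {i | ev i ≤ r})) (V := span 𝕜 (c '' {k | s ≤ ev' k})) ?_
    (fun x hx => (hW x hx.1).trans (re_inner_map_self_le_of_mem_span hb hx.2))
    (fun x hx => le_re_inner_map_self_of_mem_span hc hx)
  have := finrank_add_finrank_le_finrank_inf_add W (span 𝕜 (b '' {i | ev i ≤ r}))
  have hU := b.finrank_span_image {i | ev i ≤ r}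
  have hV := c.finrank_span_image {k | s ≤ ev' k}
  rw [coe_filter_univ] at hU hV
  omega

end Eigenbasis

/- `hA.eigenvalues` carry no ordering; the sorted `lam` enters only through the number of
eigenvalues below or above a threshold, which depends only on the multiset of eigenvalues. -/

section Counting

theorem card_filter_eq_of_map_univ_eq {ι α : Type*} [Fintype ι] {f g : ι → α}
    (h : univ.val.map f = univ.val.map g) (p : α → Prop) [DecidablePred p] :
    #{i | p (f i)} = #{i | p (g i)} := by
  have key : ∀ f : ι → α, #{i | p (f i)} = Multiset.card ((univ.val.map f).filter p) := by
    intro f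
    rw [Multiset.filter_map, Multiset.card_map]
    rfl
  rw [key, key, h]

variable {n : ℕ} {lam ev : Fin n → ℝ}

theorem Monotone.succ_le_card_filter_le (hlam : Monotone lam)
    (h : univ.val.map lam = univ.val.map ev) (j : Fin n) : (j : ℕ) + 1 ≤ #{i | ev i ≤ lam j} := by
  rw [← card_filter_eq_of_map_univ_eq h (· ≤ lam j), ← Fin.card_Iic]
  exact card_le_card fun i hi => mem_filter.mpr ⟨mem_univ i, hlam (mem_Iic.mp hi)⟩

theorem Monotone.sub_le_card_filter_ge (hlam : Monotone lam)
    (h : univ.val.map lam = univ.val.map ev) (j : Fin n) : n - j ≤ #{i | lam j ≤ ev i} := by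
  rw [← card_filter_eq_of_map_univ_eq h (lam j ≤ ·), ← Fin.card_Ici]
  exact card_le_card fun i hi => mem_filter.mpr ⟨mem_univ i, hlam (mem_Ici.mp hi)⟩

end Counting

theorem re_inner_map_self_eq_add_of_eq_add_rankOne {𝕜 E : Type*} [RCLike 𝕜] [NormedAddCommGroup E]
    [InnerProductSpace 𝕜 E] {S T : E →ₗ[𝕜] E} {α : ℝ} {y : E}
    (h : ∀ x, T x = S x + ((α : 𝕜) * ⟪y, x⟫_𝕜) • y) (x : E) :
    re ⟪T x, x⟫_𝕜 = re ⟪S x, x⟫_𝕜 + α * ‖⟪y, x⟫_𝕜‖ ^ 2 := by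
  rw [h, inner_add_left, inner_smul_left, map_add, map_mul (starRingEnd 𝕜), conj_ofReal, mul_assoc,
    RCLike.conj_mul, ← ofReal_pow, ← ofReal_mul, ofReal_re]

namespace Matrix.IsHermitian

variable {𝕜 n : Type*} [RCLike 𝕜] [Fintype n] [DecidableEq n] {A : Matrix n n 𝕜}

theorem map_univ_eq_eigenvalues (hA : A.IsHermitian) {lam : n → ℝ}
    (h : A.charpoly = ∏ j, (X - C (lam j : 𝕜))) :
    univ.val.map lam = univ.val.map hA.eigenvalues := by
  have hroots := hA.roots_charpoly_eq_eigenvalues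
  rw [h, roots_prod _ _ (prod_ne_zero_iff.mpr fun j _ => X_sub_C_ne_zero _)] at hroots
  simp only [roots_X_sub_C, Multiset.bind_singleton] at hroots
  apply Multiset.map_injective (ofReal_injective (K := 𝕜))
  rw [Multiset.map_map, Multiset.map_map]
  exact hroots

theorem toEuclideanLin_eigenvectorBasis (hA : A.IsHermitian) (i : n) :
    toEuclideanLin A (hA.eigenvectorBasis i) = (hA.eigenvalues i : 𝕜) • hA.eigenvectorBasis i := by
  rw [toLpLin_apply, hA.mulVec_eigenvectorBasis, WithLp.toLp_smul, WithLp.toLp_ofLp,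
    RCLike.real_smul_eq_coe_smul (K := 𝕜)]

end Matrix.IsHermitian

theorem Matrix.toEuclideanLin_eq_add_rankOne {𝕜 n : Type*} [RCLike 𝕜] [Fintype n] [DecidableEq n]
    {A B : Matrix n n 𝕜} {α : ℝ} {y : n → 𝕜}
    (h : ∀ x, A *ᵥ x = B *ᵥ x + (α : 𝕜) • (x ⬝ᵥ star y) • y) (x : EuclideanSpace 𝕜 n) :
    toEuclideanLin A x =
      toEuclideanLin B x + ((α : 𝕜) * ⟪WithLp.toLp 2 y, x⟫_𝕜) • WithLp.toLp 2 y := by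
  rw [toLpLin_apply, toLpLin_apply, h]
  ext j
  simp [EuclideanSpace.inner_eq_star_dotProduct, mul_assoc, RCLike.real_smul_eq_coe_mul]

theorem stmt_4 (n : ℕ) (A B : Matrix (Fin n) (Fin n) ℂ)
    (hA : A.IsHermitian) (hB : B.IsHermitian)
    (lam mu : Fin n → ℝ) (hlam : Monotone lam) (hmu : Monotone mu)
    (hlamEig : A.charpoly = ∏ j : Fin n, (X - C (lam j : ℂ)))
    (hmuEig : B.charpoly = ∏ j : Fin n, (X - C (mu j : ℂ)))
    (α : ℝ) (hα : 0 < α) (y : Fin n → ℂ)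
    (hAB : ∀ x : Fin n → ℂ, A.mulVec x = B.mulVec x + (α : ℂ) • (dotProduct x (star y)) • y) :
    (∀ j : Fin n, mu j ≤ lam j) ∧
    (∀ i j : Fin n, (i : ℕ) + 1 = (j : ℕ) → lam i ≤ mu j) := by
  have hquad := re_inner_map_self_eq_add_of_eq_add_rankOne (toEuclideanLin_eq_add_rankOne hAB)
  have hlamA := hA.map_univ_eq_eigenvalues hlamEig
  have hmuB := hB.map_univ_eq_eigenvalues hmuEig
  have hn : finrank ℂ (EuclideanSpace ℂ (Fin n)) = n := finrank_euclideanSpace_fin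
  refine ⟨fun j => ?_, fun i j hij => ?_⟩
  · refine le_of_forall_mem_re_inner_le (d := 0) hA.toEuclideanLin_eigenvectorBasis
      hB.toEuclideanLin_eigenvectorBasis (finrank_top ℂ _).ge (fun x _ => ?_) ?_
    · rw [hquad]
      exact le_add_of_nonneg_right (by positivity)
    · have := hlam.succ_le_card_filter_le hlamA j
      have := hmu.sub_le_card_filter_ge hmuB j
      omega
  · refine le_of_forall_mem_re_inner_le hB.toEuclideanLin_eigenvectorBasis
      hA.toEuclideanLin_eigenvectorBasis
      (finrank_le_finrank_orthogonal_span_singleton_add_one (WithLp.toLp 2 y)) (fun x hx => ?_) ?_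
    · rw [hquad, mem_orthogonal_singleton_iff_inner_right.mp hx]
      simp
    · have := hmu.succ_le_card_filter_le hmuB j
      have := hlam.sub_le_card_filter_ge hlamA i
      omega
end

section
/- Let f : [a,b] → ℝ be C² and monotone with |f''(x)| ≥ C > 0 for all x ∈ (a,b). Then the measure of {x ∈ [a,b] : |f(x)| ≤ ε} is at most 2√(ε/C) up to an absolute constant, i.e. ≲ (ε/C)^{1/2}. -/
open MeasureTheory Set

/-!
If `f` is increasing and `f'' ≥ C` on `[u, v]`, Taylor's formula at `u` gives
`f v - f u ≥ f' u (v - u) + C (v - u)² / 2 ≥ C (v - u)² / 2`; if `f'' ≤ -C` one expands at `v`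
instead. When `|f u|, |f v| ≤ ε` the left side is at most `2ε`, so any two points of
`{|f| ≤ ε}` are at most `2 √(ε / C)` apart, which bounds the measure of that set. Since `f''` is
continuous and `|f''| ≥ C > 0`, it has constant sign, and replacing `f` by `-f` handles
decreasing `f`.
-/

theorem taylor_mean_remainder_lagrange_one {f : ℝ → ℝ} {x₀ x : ℝ} (hx : x₀ ≠ x)
    (hf : ContDiffOn ℝ 2 f (uIcc x₀ x)) :
    ∃ ξ ∈ uIoo x₀ x, f x = f x₀ + derivWithin f (uIcc x₀ x) x₀ * (x - x₀)
      + deriv (deriv f) ξ * (x - x₀) ^ 2 / 2 := by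
  obtain ⟨ξ, hξ, h⟩ := taylor_mean_remainder_lagrange_iteratedDeriv (n := 1) hx hf
  refine ⟨ξ, hξ, ?_⟩
  simp only [taylorWithinEval_succ, taylor_within_zero_eval, iteratedDeriv_succ,
    iteratedDeriv_zero] at h
  norm_num at h
  linarith

theorem IsPreconnected.forall_le_or_forall_le_neg_of_le_abs {X : Type*} [TopologicalSpace X]
    {s : Set X} {g : X → ℝ} {C : ℝ} (hs : IsPreconnected s) (hg : ContinuousOn g s) (hC : 0 < C)
    (h : ∀ x ∈ s, C ≤ |g x|) : (∀ x ∈ s, C ≤ g x) ∨ (∀ x ∈ s, g x ≤ -C) := by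
  by_contra! hne
  obtain ⟨⟨x, hx, hgx⟩, ⟨y, hy, hgy⟩⟩ := hne
  have hgx' : g x ≤ -C := by cases le_abs'.mp (h x hx) <;> linarith
  have hgy' : C ≤ g y := by cases le_abs'.mp (h y hy) <;> linarith
  obtain ⟨z, hz, hgz⟩ := hs.intermediate_value hx hy hg
    (show (0 : ℝ) ∈ Icc (g x) (g y) from ⟨by linarith, by linarith⟩)
  have hCz := h z hz
  rw [hgz, abs_zero] at hCz
  linarith

theorem MonotoneOn.mul_sq_le_sub_of_deriv_deriv {f : ℝ → ℝ} {u v C : ℝ} (huv : u < v)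
    (hf : ContDiffOn ℝ 2 f (Icc u v)) (hmono : MonotoneOn f (Icc u v))
    (hf'' : (∀ x ∈ Ioo u v, C ≤ deriv (deriv f) x) ∨ (∀ x ∈ Ioo u v, deriv (deriv f) x ≤ -C)) :
    C / 2 * (v - u) ^ 2 ≤ f v - f u := by
  rcases hf'' with hpos | hneg
  · rw [← uIcc_of_le huv.le] at hf hmono
    obtain ⟨ξ, hξ, h⟩ := taylor_mean_remainder_lagrange_one huv.ne hf
    rw [uIoo_of_le huv.le] at hξ
    have hderiv := hmono.derivWithin_nonneg (x := u)
    nlinarith [hpos ξ hξ, mul_nonneg hderiv (sub_nonneg.mpr huv.le)]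
  · rw [← uIcc_of_ge huv.le] at hf hmono
    obtain ⟨ξ, hξ, h⟩ := taylor_mean_remainder_lagrange_one huv.ne' hf
    rw [uIoo_of_ge huv.le] at hξ
    have hderiv := hmono.derivWithin_nonneg (x := v)
    nlinarith [hneg ξ hξ, mul_nonneg hderiv (sub_nonneg.mpr huv.le)]

theorem MonotoneOn.sub_le_two_mul_sqrt_of_abs_le {f : ℝ → ℝ} {u v C ε : ℝ} (hC : 0 < C)
    (huv : u < v) (hf : ContDiffOn ℝ 2 f (Icc u v)) (hmono : MonotoneOn f (Icc u v))
    (hf'' : (∀ x ∈ Ioo u v, C ≤ deriv (deriv f) x) ∨ (∀ x ∈ Ioo u v, deriv (deriv f) x ≤ -C))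
    (hu : |f u| ≤ ε) (hv : |f v| ≤ ε) : v - u ≤ 2 * √(ε / C) := by
  have hgap := hmono.mul_sq_le_sub_of_deriv_deriv huv hf hf''
  have hsq : ((v - u) / 2) ^ 2 ≤ ε / C := by
    rw [le_div_iff₀ hC]
    nlinarith [abs_le.mp hu, abs_le.mp hv]
  linarith [(Real.le_sqrt' (by linarith)).mpr hsq]

theorem Real.volume_le_ofReal_of_forall_sub_le {s : Set ℝ} {d : ℝ}
    (h : ∀ u ∈ s, ∀ v ∈ s, u < v → v - u ≤ d) : volume s ≤ ENNReal.ofReal d := by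
  refine (Real.volume_le_diam s).trans (Metric.ediam_le fun u hu v hv => ?_)
  rcases lt_trichotomy u v with huv | rfl | hvu
  · rw [edist_comm, edist_dist, Real.dist_eq, abs_of_pos (sub_pos.mpr huv)]
    exact ENNReal.ofReal_le_ofReal (h u hu v hv huv)
  · simp
  · rw [edist_dist, Real.dist_eq, abs_of_pos (sub_pos.mpr hvu)]
    exact ENNReal.ofReal_le_ofReal (h v hv u hu hvu)

theorem MonotoneOn.volume_abs_le_le {f : ℝ → ℝ} {a b C : ℝ} (ε : ℝ) (hC : 0 < C)
    (hf : ContDiffOn ℝ 2 f (Icc a b)) (hmono : MonotoneOn f (Icc a b))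
    (hf'' : (∀ x ∈ Ioo a b, C ≤ deriv (deriv f) x) ∨ (∀ x ∈ Ioo a b, deriv (deriv f) x ≤ -C)) :
    volume {x ∈ Icc a b | |f x| ≤ ε} ≤ ENNReal.ofReal (2 * √(ε / C)) := by
  refine Real.volume_le_ofReal_of_forall_sub_le ?_
  rintro u ⟨hu, hfu⟩ v ⟨hv, hfv⟩ huv
  have hsub : Icc u v ⊆ Icc a b := Icc_subset_Icc hu.1 hv.2
  have hsub' : Ioo u v ⊆ Ioo a b := Ioo_subset_Ioo hu.1 hv.2
  refine (hmono.mono hsub).sub_le_two_mul_sqrt_of_abs_le hC huv (hf.mono hsub) ?_ hfu hfv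
  exact hf''.imp (fun h x hx => h x (hsub' hx)) (fun h x hx => h x (hsub' hx))

theorem stmt_15_general (a b : ℝ) (f : ℝ → ℝ)
    (hf : ContDiffOn ℝ 2 f (Set.Icc a b))
    (hmono : MonotoneOn f (Set.Icc a b) ∨ AntitoneOn f (Set.Icc a b))
    (C : ℝ) (hC : 0 < C)
    (hf'' : ∀ x ∈ Set.Ioo a b, C ≤ |deriv (deriv f) x|)
    (ε : ℝ) :
    volume {x ∈ Set.Icc a b | |f x| ≤ ε} ≤ ENNReal.ofReal (2 * Real.sqrt (ε / C)) := by
  have hcont : ContinuousOn (deriv (deriv f)) (Ioo a b) :=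
    ((hf.mono Ioo_subset_Icc_self).deriv_of_isOpen isOpen_Ioo (m := 1) le_rfl
      ).continuousOn_deriv_of_isOpen isOpen_Ioo le_rfl
  have hsign := isPreconnected_Ioo.forall_le_or_forall_le_neg_of_le_abs hcont hC hf''
  rcases hmono with hmono | hanti
  · exact hmono.volume_abs_le_le ε hC hf hsign
  · have hsign' : (∀ x ∈ Ioo a b, C ≤ deriv (deriv (-f)) x) ∨
        (∀ x ∈ Ioo a b, deriv (deriv (-f)) x ≤ -C) := by
      simp only [deriv.neg', deriv.fun_neg]
      exact hsign.symm.imp (fun h x hx => le_neg.mp (h x hx)) (fun h x hx => neg_le_neg (h x hx))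
    simpa using hanti.neg.volume_abs_le_le ε hC hf.neg hsign'

theorem stmt_15 (a b : ℝ) (hab : a ≤ b) (f : ℝ → ℝ)
    (hf : ContDiffOn ℝ 2 f (Set.Icc a b))
    (hmono : MonotoneOn f (Set.Icc a b) ∨ AntitoneOn f (Set.Icc a b))
    (C : ℝ) (hC : 0 < C)
    (hf'' : ∀ x ∈ Set.Ioo a b, C ≤ |deriv (deriv f) x|)
    (ε : ℝ) (hε : 0 < ε) :
    volume {x ∈ Set.Icc a b | |f x| ≤ ε} ≤ ENNReal.ofReal (2 * Real.sqrt (ε / C)) :=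
  stmt_15_general a b f hf hmono C hC hf'' ε
end

section
/- Let f : [a,b] → ℝ be C³ with |f'(x)| + |f''(x)| ≥ C and |f''(x)| + |f'''(x)| ≤ κ for all x. Then for ε ≲ C ≲ κ(b−a), the measure of {x ∈ [a,b] : |f(x)| ≤ ε} is ≲ (κ/C)·(ε/C)^{1/2}·(b−a). -/
/-!
Near any point either |f'| ≥ C/2 or |f''| ≥ C/2, and since f'' and f''' are bounded by κ this
persists, with C/4 in place of C/2, on every interval of length C/(4κ). Where |f'| ≥ C/4 the
sublevel set {|f| ≤ ε} has length O(ε/C) by the mean value theorem. Where |f''| ≥ C/4, f' is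
monotone, and splitting at |f'| = δ bounds the sublevel set by O(δ/C + ε/δ); the choice
δ = √(εC) gives O(√(ε/C)). Summing over the (b − a)/(C/(4κ)) intervals gives the claim.
-/

open MeasureTheory Set

theorem volume_le_ofReal_of_sub_le {t : Set ℝ} {d : ℝ}
    (h : ∀ x ∈ t, ∀ y ∈ t, x ≤ y → y - x ≤ d) : volume t ≤ ENNReal.ofReal d := by
  refine (Real.volume_le_diam t).trans (Metric.ediam_le fun x hx y hy => ?_)
  rw [edist_dist, Real.dist_eq]
  refine ENNReal.ofReal_le_ofReal ?_
  rcases le_total x y with hxy | hyx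
  · rw [abs_sub_comm, abs_of_nonneg (sub_nonneg.2 hxy)]
    exact h x hx y hy hxy
  · rw [abs_of_nonneg (sub_nonneg.2 hyx)]
    exact h y hy x hx hyx

theorem Set.OrdConnected.inter_setOf_const_le_of_monotoneOn {α β : Type*} [Preorder α] [Preorder β]
    {s : Set α} {g : α → β} (hs : s.OrdConnected) (hg : MonotoneOn g s) (c : β) :
    (s ∩ {x | c ≤ g x}).OrdConnected :=
  ⟨fun _ hx _ hy _ hz =>
    ⟨hs.out hx.1 hy.1 hz, hx.2.trans (hg hx.1 (hs.out hx.1 hy.1 hz) hz.1)⟩⟩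

theorem Set.OrdConnected.inter_setOf_le_const_of_monotoneOn {α β : Type*} [Preorder α] [Preorder β]
    {s : Set α} {g : α → β} (hs : s.OrdConnected) (hg : MonotoneOn g s) (c : β) :
    (s ∩ {x | g x ≤ c}).OrdConnected :=
  ⟨fun _ hx _ hy _ hz =>
    ⟨hs.out hx.1 hy.1 hz, (hg (hs.out hx.1 hy.1 hz) hy.1 hz.2).trans hy.2⟩⟩

section Sublevel

variable {s : Set ℝ} {φ : ℝ → ℝ} {lam ε : ℝ}

theorem volume_sublevel_le_of_le_deriv (hs : s.OrdConnected)
    (hφ : ∀ x ∈ s, DifferentiableAt ℝ φ x) (hlam : 0 < lam) (hderiv : ∀ x ∈ s, lam ≤ deriv φ x) :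
    volume (s ∩ {x | |φ x| ≤ ε}) ≤ ENNReal.ofReal (2 * ε / lam) := by
  have hslope := hs.convex.mul_sub_le_image_sub_of_le_deriv
    (fun x hx => (hφ x hx).continuousAt.continuousWithinAt)
    (fun x hx => (hφ x (interior_subset hx)).differentiableWithinAt)
    (fun x hx => hderiv x (interior_subset hx))
  refine volume_le_ofReal_of_sub_le fun x hx y hy hxy => ?_
  rw [le_div_iff₀ hlam]
  have hφx : |φ x| ≤ ε := hx.2
  have hφy : |φ y| ≤ ε := hy.2
  linarith [hslope x hx.1 y hy.1 hxy, (abs_le.1 hφx).1, (abs_le.1 hφy).2]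

theorem forall_le_deriv_or_forall_le_deriv_neg (hs : s.OrdConnected)
    (hφ : ∀ x ∈ s, DifferentiableAt ℝ φ x) (hlam : 0 < lam) (hderiv : ∀ x ∈ s, lam ≤ |deriv φ x|) :
    (∀ x ∈ s, lam ≤ deriv φ x) ∨ ∀ x ∈ s, lam ≤ deriv (-φ) x := by
  simp only [deriv.neg']
  by_contra! h
  obtain ⟨⟨x, hx, hxlam⟩, ⟨y, hy, hylam⟩⟩ := h
  have hx0 : deriv φ x ≤ 0 := by cases abs_cases (deriv φ x) <;> linarith [hderiv x hx]
  have hy0 : 0 ≤ deriv φ y := by cases abs_cases (deriv φ y) <;> linarith [hderiv y hy]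
  -- Darboux: `deriv φ` takes the value 0 between `x` and `y`.
  obtain ⟨z, hz, hz0⟩ :=
    (hs.image_deriv hφ).out (mem_image_of_mem _ hx) (mem_image_of_mem _ hy) ⟨hx0, hy0⟩
  linarith [hderiv z hz, abs_eq_zero.2 hz0]

theorem volume_sublevel_le_of_le_abs_deriv (hs : s.OrdConnected)
    (hφ : ∀ x ∈ s, DifferentiableAt ℝ φ x) (hlam : 0 < lam) (hderiv : ∀ x ∈ s, lam ≤ |deriv φ x|) :
    volume (s ∩ {x | |φ x| ≤ ε}) ≤ ENNReal.ofReal (2 * ε / lam) := by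
  rcases forall_le_deriv_or_forall_le_deriv_neg hs hφ hlam hderiv with h | h
  · exact volume_sublevel_le_of_le_deriv hs hφ hlam h
  · simpa only [Pi.neg_apply, abs_neg] using
      volume_sublevel_le_of_le_deriv hs (fun x hx => (hφ x hx).neg) hlam h

theorem volume_sublevel_le_of_le_deriv_deriv (hs : s.OrdConnected)
    (hφ : ∀ x ∈ s, DifferentiableAt ℝ φ x) (hφ' : ∀ x ∈ s, DifferentiableAt ℝ (deriv φ) x)
    (hlam : 0 < lam) (hε : 0 < ε) (hderiv2 : ∀ x ∈ s, lam ≤ deriv (deriv φ) x) :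
    volume (s ∩ {x | |φ x| ≤ ε}) ≤ ENNReal.ofReal (6 * √(ε / lam)) := by
  set q := √(ε / lam)
  have hq : 0 < q := Real.sqrt_pos.2 (div_pos hε hlam)
  have hε_eq : ε = lam * q ^ 2 := by
    rw [Real.sq_sqrt (div_pos hε hlam).le]
    field_simp
  -- The cut-off `δ = lam * q = √(ε * lam)` balances `2 * δ / lam` against `2 * ε / δ`.
  have hδ : 0 < lam * q := mul_pos hlam hq
  have hmono : MonotoneOn (deriv φ) s :=
    monotoneOn_of_deriv_nonneg hs.convex (fun x hx => (hφ' x hx).continuousAt.continuousWithinAt)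
      (fun x hx => (hφ' x (interior_subset hx)).differentiableWithinAt)
      (fun x hx => hlam.le.trans (hderiv2 x (interior_subset hx)))
  have hcover : s ∩ {x | |φ x| ≤ ε} ⊆ s ∩ {x | |deriv φ x| ≤ lam * q} ∪
      s ∩ {x | lam * q ≤ deriv φ x} ∩ {x | |φ x| ≤ ε} ∪
      s ∩ {x | deriv φ x ≤ -(lam * q)} ∩ {x | |φ x| ≤ ε} := by
    rintro x ⟨hxs, hx⟩
    rcases le_total |deriv φ x| (lam * q) with h | h
    · exact Or.inl (Or.inl ⟨hxs, h⟩)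
    · rcases le_abs'.1 h with h | h
      · exact Or.inr ⟨⟨hxs, h⟩, hx⟩
      · exact Or.inl (Or.inr ⟨⟨hxs, h⟩, hx⟩)
  have hsmall := volume_sublevel_le_of_le_deriv (ε := lam * q) hs hφ' hlam hderiv2
  have hpos := volume_sublevel_le_of_le_abs_deriv (ε := ε)
    (hs.inter_setOf_const_le_of_monotoneOn hmono _) (fun x hx => hφ x hx.1) hδ
    (fun x hx => hx.2.trans (le_abs_self _))
  have hneg := volume_sublevel_le_of_le_abs_deriv (ε := ε)
    (hs.inter_setOf_le_const_of_monotoneOn hmono _) (fun x hx => hφ x hx.1) hδ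
    (fun x hx => le_neg.1 hx.2 |>.trans (neg_le_abs _))
  calc volume (s ∩ {x | |φ x| ≤ ε})
      ≤ ENNReal.ofReal (2 * (lam * q) / lam) + ENNReal.ofReal (2 * ε / (lam * q)) +
          ENNReal.ofReal (2 * ε / (lam * q)) :=
        (measure_mono hcover).trans <| (measure_union_le _ _).trans <|
          add_le_add ((measure_union_le _ _).trans (add_le_add hsmall hpos)) hneg
    _ = ENNReal.ofReal (6 * q) := by
        rw [← ENNReal.ofReal_add (by positivity) (by positivity),
          ← ENNReal.ofReal_add (by positivity) (by positivity), hε_eq]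
        congr 1
        field_simp
        ring

theorem volume_sublevel_le_of_le_abs_deriv_deriv (hs : s.OrdConnected)
    (hφ : ∀ x ∈ s, DifferentiableAt ℝ φ x) (hφ' : ∀ x ∈ s, DifferentiableAt ℝ (deriv φ) x)
    (hlam : 0 < lam) (hε : 0 < ε) (hderiv2 : ∀ x ∈ s, lam ≤ |deriv (deriv φ) x|) :
    volume (s ∩ {x | |φ x| ≤ ε}) ≤ ENNReal.ofReal (6 * √(ε / lam)) := by
  rcases forall_le_deriv_or_forall_le_deriv_neg hs hφ' hlam hderiv2 with h | h
  · exact volume_sublevel_le_of_le_deriv_deriv hs hφ hφ' hlam hε h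
  · have hderiv : deriv (-φ) = -deriv φ := deriv.neg'
    simpa only [Pi.neg_apply, abs_neg] using
      volume_sublevel_le_of_le_deriv_deriv (φ := -φ) hs (fun x hx => (hφ x hx).neg)
        (hderiv ▸ fun x hx => (hφ' x hx).neg) hlam hε (hderiv ▸ h)

end Sublevel

section Dichotomy

variable {s : Set ℝ} {u r C κ : ℝ}

theorem forall_le_abs_or_forall_le_abs_deriv {g : ℝ → ℝ} (hs : s.OrdConnected)
    (hsub : s ⊆ Icc u (u + r)) (hκr : κ * r ≤ C / 4)
    (hg : ∀ x ∈ s, DifferentiableAt ℝ g x) (hg' : ∀ x ∈ s, DifferentiableAt ℝ (deriv g) x)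
    (hlower : ∀ x ∈ s, C ≤ |g x| + |deriv g x|)
    (hupper : ∀ x ∈ s, |deriv g x| + |deriv (deriv g) x| ≤ κ) :
    (∀ x ∈ s, C / 4 ≤ |g x|) ∨ ∀ x ∈ s, C / 4 ≤ |deriv g x| := by
  rcases s.eq_empty_or_nonempty with rfl | ⟨x₀, hx₀⟩
  · simp
  have hκ : 0 ≤ κ := by
    linarith [hupper x₀ hx₀, abs_nonneg (deriv g x₀), abs_nonneg (deriv (deriv g) x₀)]
  have hosc {h : ℝ → ℝ} (hd : ∀ x ∈ s, DifferentiableAt ℝ h x) (hb : ∀ x ∈ s, |deriv h x| ≤ κ)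
      (x : ℝ) (hx : x ∈ s) : |h x - h x₀| ≤ C / 4 :=
    calc |h x - h x₀| ≤ κ * |x - x₀| := hs.convex.norm_image_sub_le_of_norm_deriv_le hd hb hx₀ hx
      _ ≤ κ * r := mul_le_mul_of_nonneg_left (abs_sub_le_iff.2
          ⟨by linarith [(hsub hx).2, (hsub hx₀).1], by linarith [(hsub hx).1, (hsub hx₀).2]⟩) hκ
      _ ≤ C / 4 := hκr
  have hosc₀ := hosc hg fun x hx => by linarith [hupper x hx, abs_nonneg (deriv (deriv g) x)]
  have hosc₁ := hosc hg' fun x hx => by linarith [hupper x hx, abs_nonneg (deriv g x)]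
  by_cases h : C / 2 ≤ |g x₀|
  · exact Or.inl fun x hx => by
      linarith [abs_sub_abs_le_abs_sub (g x₀) (g x), abs_sub_comm (g x) (g x₀), hosc₀ x hx]
  · exact Or.inr fun x hx => by
      linarith [hlower x₀ hx₀, abs_sub_abs_le_abs_sub (deriv g x₀) (deriv g x),
        abs_sub_comm (deriv g x) (deriv g x₀), hosc₁ x hx]

theorem volume_sublevel_le_of_deriv_bounds {f : ℝ → ℝ} {ε : ℝ} (hs : s.OrdConnected)
    (hsub : s ⊆ Icc u (u + r)) (hκr : κ * r ≤ C / 4)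
    (hf : ∀ x ∈ s, DifferentiableAt ℝ f x) (hf' : ∀ x ∈ s, DifferentiableAt ℝ (deriv f) x)
    (hf'' : ∀ x ∈ s, DifferentiableAt ℝ (deriv (deriv f)) x)
    (hlower : ∀ x ∈ s, C ≤ |deriv f x| + |deriv (deriv f) x|)
    (hupper : ∀ x ∈ s, |deriv (deriv f) x| + |deriv (deriv (deriv f)) x| ≤ κ)
    (hC : 0 < C) (hε : 0 < ε) (hεC : ε ≤ C) :
    volume (s ∩ {x | |f x| ≤ ε}) ≤ ENNReal.ofReal (12 * √(ε / C)) := by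
  rcases forall_le_abs_or_forall_le_abs_deriv hs hsub hκr hf' hf'' hlower hupper with h | h
  · calc volume (s ∩ {x | |f x| ≤ ε}) ≤ ENNReal.ofReal (2 * ε / (C / 4)) :=
          volume_sublevel_le_of_le_abs_deriv hs hf (by positivity) h
      _ ≤ ENNReal.ofReal (12 * √(ε / C)) := by
          refine ENNReal.ofReal_le_ofReal ?_
          have : ε / C ≤ √(ε / C) := Real.le_sqrt_self_iff.2 ((div_le_one hC).2 hεC)
          have : 0 ≤ √(ε / C) := Real.sqrt_nonneg _
          calc 2 * ε / (C / 4) = 8 * (ε / C) := by field_simp; ring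
            _ ≤ 12 * √(ε / C) := by linarith
  · calc volume (s ∩ {x | |f x| ≤ ε}) ≤ ENNReal.ofReal (6 * √(ε / (C / 4))) :=
          volume_sublevel_le_of_le_abs_deriv_deriv hs hf hf' (by positivity) hε h
      _ = ENNReal.ofReal (12 * √(ε / C)) := by
          rw [show ε / (C / 4) = 2 ^ 2 * (ε / C) by field_simp; ring,
            Real.sqrt_mul (by norm_num), Real.sqrt_sq (by norm_num)]
          ring_nf

end Dichotomy

theorem ContDiffOn.differentiableAt_deriv_deriv {f : ℝ → ℝ} {U : Set ℝ}
    (hf : ContDiffOn ℝ 3 f U) (hU : IsOpen U) {x : ℝ} (hx : x ∈ U) :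
    DifferentiableAt ℝ f x ∧ DifferentiableAt ℝ (deriv f) x ∧
      DifferentiableAt ℝ (deriv (deriv f)) x := by
  have hf₁ := hf.deriv_of_isOpen hU (m := 2) (by norm_num)
  have hf₂ := hf₁.deriv_of_isOpen hU (m := 1) (by norm_num)
  exact ⟨(hf.contDiffAt (hU.mem_nhds hx)).differentiableAt (by norm_num),
    (hf₁.contDiffAt (hU.mem_nhds hx)).differentiableAt (by norm_num),
    (hf₂.contDiffAt (hU.mem_nhds hx)).differentiableAt (by norm_num)⟩

theorem volume_le_of_subset_Ioo_of_volume_inter_Icc_le {t : Set ℝ} {a b ℓ : ℝ} {M : ENNReal}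
    (ht : t ⊆ Ioo a b) (hℓ : 0 < ℓ) (h : ∀ u, volume (t ∩ Icc u (u + ℓ)) ≤ M) :
    volume t ≤ ⌈(b - a) / ℓ⌉₊ * M := by
  have hcover : t ⊆ ⋃ j ∈ Finset.range ⌈(b - a) / ℓ⌉₊, t ∩ Icc (a + j * ℓ) (a + j * ℓ + ℓ) := by
    intro x hx
    obtain ⟨hax, hxb⟩ := ht hx
    have hx0 : 0 ≤ (x - a) / ℓ := div_nonneg (sub_nonneg.2 hax.le) hℓ.le
    have hfloor := (le_div_iff₀ hℓ).1 (Nat.floor_le hx0)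
    have hfloor' := (div_lt_iff₀ hℓ).1 (Nat.lt_floor_add_one ((x - a) / ℓ))
    refine mem_biUnion (x := ⌊(x - a) / ℓ⌋₊) (Finset.mem_range.2 ?_) ⟨hx, by linarith, by linarith⟩
    exact (Nat.floor_lt hx0).2 <|
      (div_lt_div_of_pos_right (by linarith) hℓ).trans_le (Nat.le_ceil _)
  calc volume t ≤ ∑ j ∈ Finset.range ⌈(b - a) / ℓ⌉₊, volume (t ∩ Icc (a + j * ℓ) (a + j * ℓ + ℓ)) :=
        (measure_mono hcover).trans (measure_biUnion_finset_le _ _)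
    _ ≤ ∑ j ∈ Finset.range ⌈(b - a) / ℓ⌉₊, M := Finset.sum_le_sum fun j _ => h _
    _ = ⌈(b - a) / ℓ⌉₊ * M := by simp

theorem stmt_16 (a b : ℝ) (hab : a < b) (f : ℝ → ℝ)
    (hf : ContDiffOn ℝ 3 f (Set.Icc a b))
    (C κ : ℝ) (hC : 0 < C)
    (hlower : ∀ x ∈ Set.Icc a b, C ≤ |deriv f x| + |deriv (deriv f) x|)
    (hupper : ∀ x ∈ Set.Icc a b, |deriv (deriv f) x| + |deriv (deriv (deriv f)) x| ≤ κ)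
    (ε : ℝ) (hε : 0 < ε) (hεC : ε ≤ C) (hCκ : C ≤ κ * (b - a)) :
    volume {x ∈ Set.Icc a b | |f x| ≤ ε} ≤
      ENNReal.ofReal (100 * (κ / C) * Real.sqrt (ε / C) * (b - a)) := by
  have hκ : 0 < κ := pos_of_mul_pos_left (hC.trans_le hCκ) (sub_pos.2 hab).le
  have hℓ : 0 < C / (4 * κ) := by positivity
  have hloc (u : ℝ) : volume (Ioo a b ∩ {x | |f x| ≤ ε} ∩ Icc u (u + C / (4 * κ))) ≤
      ENNReal.ofReal (12 * √(ε / C)) := by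
    have hd (x) (hx : x ∈ Ioo a b ∩ Icc u (u + C / (4 * κ))) :=
      (hf.mono Ioo_subset_Icc_self).differentiableAt_deriv_deriv isOpen_Ioo hx.1
    rw [inter_right_comm]
    exact volume_sublevel_le_of_deriv_bounds (ordConnected_Ioo.inter ordConnected_Icc)
      inter_subset_right (le_of_eq (by field_simp)) (fun x hx => (hd x hx).1)
      (fun x hx => (hd x hx).2.1) (fun x hx => (hd x hx).2.2)
      (fun x hx => hlower x (Ioo_subset_Icc_self hx.1))
      (fun x hx => hupper x (Ioo_subset_Icc_self hx.1)) hC hε hεC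
  have hN : (⌈(b - a) / (C / (4 * κ))⌉₊ : ℝ) ≤ 5 * (κ * (b - a) / C) := by
    have := Nat.ceil_lt_add_one (div_nonneg (sub_pos.2 hab).le hℓ.le)
    rw [show (b - a) / (C / (4 * κ)) = 4 * (κ * (b - a) / C) by field_simp] at this ⊢
    linarith [(one_le_div hC).2 hCκ]
  calc volume {x ∈ Icc a b | |f x| ≤ ε} = volume (Ioo a b ∩ {x | |f x| ≤ ε}) :=
        measure_congr (Ioo_ae_eq_Icc.symm.inter (Filter.EventuallyEq.refl _ _))
    _ ≤ ⌈(b - a) / (C / (4 * κ))⌉₊ * ENNReal.ofReal (12 * √(ε / C)) :=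
        volume_le_of_subset_Ioo_of_volume_inter_Icc_le inter_subset_left hℓ hloc
    _ ≤ ENNReal.ofReal (100 * (κ / C) * Real.sqrt (ε / C) * (b - a)) := by
        rw [← ENNReal.ofReal_natCast, ← ENNReal.ofReal_mul (by positivity)]
        refine ENNReal.ofReal_le_ofReal ((mul_le_mul_of_nonneg_right hN (by positivity)).trans ?_)
        have : 0 ≤ κ / C * √(ε / C) * (b - a) := by positivity
        linarith [show 5 * (κ * (b - a) / C) * (12 * √(ε / C)) = 60 * (κ / C * √(ε / C) * (b - a))
          by ring]
end
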